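/- arXiv:2210.04622 — 5 statements merged into one kernel-verified Lean document; each statement's English description precedes it below -/
import Mathlib

section
/- There exist infinitely many pairs of SP numbers that are consecutive natural numbers; that is, the set of natural numbers n such that both n and n + 1 are SP numbers is infinite. -/
/-!
If `3 y² = 2 x² + 1` with `x, y ≥ 2`, then `(2 x², 3 y²)` is a pair of SP twins. This Pell-type
equation has infinitely many solutions: `(x, y) ↦ (5x + 6y, 4x + 5y)` preserves `3 y² - 2 x²`
and strictly increases `x`, so iterating it from `(11, 9)` gives infinitely many twins.
-/

/-- A natural number is an SP number if it equals `p * a ^ 2` for a prime `p`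
and a natural number `a ≥ 2`. -/
def IsSP (n : ℕ) : Prop := ∃ p a : ℕ, p.Prime ∧ 2 ≤ a ∧ n = p * a ^ 2

def pellSol : ℕ → ℕ × ℕ
  | 0 => (11, 9)
  | k + 1 => (5 * (pellSol k).1 + 6 * (pellSol k).2, 4 * (pellSol k).1 + 5 * (pellSol k).2)

lemma three_mul_pellSol_snd_sq (k : ℕ) :
    3 * (pellSol k).2 ^ 2 = 2 * (pellSol k).1 ^ 2 + 1 := by
  induction k with
  | zero => rfl
  | succ k ih =>
    simp only [pellSol]
    linear_combination ih

lemma two_le_pellSol (k : ℕ) : 2 ≤ (pellSol k).1 ∧ 2 ≤ (pellSol k).2 := by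
  induction k with
  | zero => exact ⟨by decide, by decide⟩
  | succ k ih =>
    simp only [pellSol]
    omega

lemma strictMono_pellSol_fst : StrictMono fun k => (pellSol k).1 :=
  strictMono_nat_of_lt_succ fun k => by
    have := two_le_pellSol k
    simp only [pellSol]
    omega

/-- There are infinitely many SP twins: pairs of consecutive natural numbers
that are both SP numbers. -/
theorem infinite_SP_twins : {n : ℕ | IsSP n ∧ IsSP (n + 1)}.Infinite := by
  have hmono : StrictMono fun k => 2 * (pellSol k).1 ^ 2 := fun a b hab => by
    have := strictMono_pellSol_fst hab
    dsimp only at this ⊢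
    gcongr
  refine Set.infinite_of_injective_forall_mem hmono.injective fun k => ⟨?_, ?_⟩
  · exact ⟨2, _, Nat.prime_two, (two_le_pellSol k).1, rfl⟩
  · exact ⟨3, _, Nat.prime_three, (two_le_pellSol k).2, (three_mul_pellSol_snd_sq k).symm⟩
end

section
/- Define SPFarey(x) as the number of ordered pairs (s, t) of SP numbers with s < t ≤ x and gcd(s, t) = 1. Then SPFarey(x) = O(x²/(log x)²); that is, there exist a constant C > 0 and a threshold X such that for all x ≥ X, SPFarey(x) ≤ C·x²/(log x)². -/
open scoped Classical in
/-- `SPFarey x` is the number of ordered pairs `(s, t)` of SP numbers with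
`s < t ≤ x` and `gcd(s, t) = 1`. -/
noncomputable def SPFarey (x : ℝ) : ℕ :=
  ((Finset.range (⌊x⌋₊ + 1) ×ˢ Finset.range (⌊x⌋₊ + 1)).filter
    (fun st => IsSP st.1 ∧ IsSP st.2 ∧ st.1 < st.2 ∧ Nat.gcd st.1 st.2 = 1)).card

noncomputable def PC (m k : ℕ) : ℕ :=
  ((Finset.range (m+1)).filter (fun p => Nat.Prime p ∧ k < p)).card

noncomputable def Pn (m : ℕ) : ℕ := ((Finset.range (m+1)).filter Nat.Prime).card

open scoped Classical in
noncomputable def S (N : ℕ) : ℕ := ((Finset.range (N+1)).filter IsSP).card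

lemma pow_PC_le (m k : ℕ) : (k+1) ^ PC m k ≤ 4 ^ m := by
  calc (k+1) ^ PC m k
      ≤ ∏ p ∈ (Finset.range (m+1)).filter (fun p => Nat.Prime p ∧ k < p), p := by
        apply Finset.pow_card_le_prod
        intro p hp
        simp only [Finset.mem_filter] at hp
        omega
    _ ≤ primorial m := by
        apply Finset.prod_le_prod_of_subset_of_one_le'
        · intro p hp
          simp only [Finset.mem_filter] at hp ⊢
          exact ⟨hp.1, hp.2.1⟩
        · intro p hp _
          exact Nat.one_le_iff_ne_zero.mpr (by
            simp only [Finset.mem_filter] at hp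
            exact hp.2.pos.ne')
    _ ≤ 4 ^ m := primorial_le_4_pow m

lemma Pn_le (m k : ℕ) : Pn m ≤ (k+1) + PC m k := by
  have : (Finset.range (m+1)).filter Nat.Prime ⊆
      (Finset.range (k+1)) ∪ (Finset.range (m+1)).filter (fun p => Nat.Prime p ∧ k < p) := by
    intro p hp
    simp only [Finset.mem_filter, Finset.mem_union, Finset.mem_range] at hp ⊢
    rcases le_or_gt p k with h | h
    · exact Or.inl (by omega)
    · exact Or.inr ⟨hp.1, hp.2, h⟩
  calc Pn m ≤ _ := Finset.card_le_card this
    _ ≤ (k+1) + PC m k := by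
        refine (Finset.card_union_le _ _).trans ?_
        simp [PC]

lemma PC_le_real (m k : ℕ) (hk : 1 ≤ k) :
    (PC m k : ℝ) * Real.log (k+1) ≤ (m : ℝ) * Real.log 4 := by
  have h := pow_PC_le m k
  have h2 : ((k:ℝ)+1) ^ PC m k ≤ (4:ℝ) ^ m := by exact_mod_cast h
  have hl := Real.log_le_log (by positivity) h2
  rw [Real.log_pow, Real.log_pow] at hl
  exact_mod_cast hl

open scoped Classical in
lemma S_le_sum (N : ℕ) : S N ≤ ∑ a ∈ Finset.Icc 2 (Nat.sqrt N), Pn (N / a^2) := by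
  have hsub : (Finset.range (N+1)).filter IsSP ⊆
      (Finset.Icc 2 (Nat.sqrt N)).biUnion
        (fun a => ((Finset.range (N+1)).filter (fun n => ∃ p, Nat.Prime p ∧ n = p * a^2))) := by
    intro n hn
    simp only [Finset.mem_filter, Finset.mem_range] at hn
    obtain ⟨hnN, p, a, hp, ha, rfl⟩ := hn
    simp only [Finset.mem_biUnion, Finset.mem_Icc, Finset.mem_filter, Finset.mem_range]
    refine ⟨a, ⟨ha, ?_⟩, hnN, p, hp, rfl⟩
    rw [Nat.le_sqrt]
    calc a * a = a^2 := (sq a).symm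
      _ ≤ p * a^2 := Nat.le_mul_of_pos_left _ hp.pos
      _ ≤ N := by omega
  refine (Finset.card_le_card hsub).trans ?_
  refine (Finset.card_biUnion_le).trans ?_
  apply Finset.sum_le_sum
  intro a ha
  simp only [Finset.mem_Icc] at ha
  have ha2 : 0 < a^2 := by nlinarith [ha.1]
  -- inject n ↦ n / a^2 into primes ≤ N / a^2
  apply Finset.card_le_card_of_injOn (fun n => n / a^2)
  · intro n hn
    simp only [Finset.mem_coe, Finset.mem_filter, Finset.mem_range] at hn ⊢
    obtain ⟨hnN, p, hp, rfl⟩ := hn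
    rw [Nat.mul_div_cancel _ ha2]
    constructor
    · have h1 : p * a^2 ≤ N := by omega
      have := Nat.div_le_div_right (c := a^2) h1
      rw [Nat.mul_div_cancel _ ha2] at this
      omega
    · exact hp
  · intro n hn m hm hnm
    simp only [Finset.mem_coe, Finset.mem_filter] at hn hm
    obtain ⟨-, p, hp, rfl⟩ := hn
    obtain ⟨-, q, hq, rfl⟩ := hm
    simp only [Nat.mul_div_cancel _ ha2] at hnm
    rw [hnm]

lemma sum_inv_sq (M : ℕ) : ∑ a ∈ Finset.Icc 2 M, (1 / (a:ℝ)^2) ≤ 1 := by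
  have key : ∀ M : ℕ, 1 ≤ M → ∑ a ∈ Finset.Icc 2 M, (1 / (a:ℝ)^2) ≤ 1 - 1/(M:ℝ) := by
    intro M hM
    induction M with
    | zero => omega
    | succ m ih =>
      rcases Nat.eq_or_lt_of_le hM with h | h
      · simp [← h]
      · have hm : 1 ≤ m := by omega
        rw [Finset.sum_Icc_succ_top (by omega : 2 ≤ m + 1)]
        have h2 : (1:ℝ) / ((m:ℝ)+1)^2 ≤ 1/(m:ℝ) - 1/((m:ℝ)+1) := by
          have hm0 : (0:ℝ) < m := by exact_mod_cast hm
          have heq : 1/(m:ℝ) - 1/((m:ℝ)+1) = 1/((m:ℝ)*((m:ℝ)+1)) := by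
            field_simp
            ring
          rw [heq]
          apply one_div_le_one_div_of_le (by positivity)
          nlinarith
        calc _ ≤ (1 - 1/(m:ℝ)) + (1/(m:ℝ) - 1/((m:ℝ)+1)) := by
              have := ih hm
              push_cast
              push_cast at this h2
              linarith
          _ = 1 - 1/((m:ℝ)+1) := by ring
          _ = 1 - 1/((m+1 : ℕ):ℝ) := by push_cast; ring
    -- end
  rcases Nat.lt_or_ge M 1 with h | h
  · interval_cases M <;> simp
  · refine (key M h).trans ?_
    have : (0:ℝ) < M := by exact_mod_cast h
    have : 0 ≤ 1/(M:ℝ) := by positivity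
    linarith

lemma S_bound (N : ℕ) (hN : 16 ≤ N) : (S N : ℝ) * Real.log N ≤ 20 * N := by
  set k := Nat.sqrt (Nat.sqrt N) with hkdef
  have hsN : 4 ≤ Nat.sqrt N := Nat.le_sqrt.mpr (by omega)
  have hk2 : 2 ≤ k := Nat.le_sqrt.mpr (by omega)
  have hk1 : 1 ≤ k := by omega
  have hNpos : (0:ℝ) < N := by positivity
  have hlogN_pos : 0 < Real.log N := Real.log_pos (by exact_mod_cast (by omega : 1 < N))
  have hlogk_pos : 0 < Real.log ((k:ℝ)+1) := Real.log_pos (by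
    have : (2:ℝ) ≤ k := by exact_mod_cast hk2
    linarith)
  -- N < (k+1)^4
  have hN4 : (N:ℝ) ≤ ((k:ℝ)+1)^4 := by
    have h1 : Nat.sqrt N < (k+1) * (k+1) := Nat.lt_succ_sqrt (Nat.sqrt N)
    have h2 : N < (Nat.sqrt N + 1) * (Nat.sqrt N + 1) := Nat.lt_succ_sqrt N
    have h3 : N < ((k+1)*(k+1))^2 := by nlinarith
    have := (Nat.cast_lt (α := ℝ)).mpr h3
    push_cast at this
    nlinarith
  have hlog4N : Real.log N ≤ 4 * Real.log ((k:ℝ)+1) := by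
    calc Real.log N ≤ Real.log (((k:ℝ)+1)^4) := Real.log_le_log hNpos hN4
      _ = 4 * Real.log ((k:ℝ)+1) := by rw [Real.log_pow]; push_cast; ring
  have hlog4_nonneg : (0:ℝ) ≤ Real.log 4 := Real.log_nonneg (by norm_num)
  set c : ℝ := Real.log 4 / Real.log ((k:ℝ)+1) with hc
  have hc_nonneg : 0 ≤ c := by positivity
  -- step 1 : real bound on S N
  have h1 : (S N : ℝ) ≤ (Nat.sqrt N : ℝ) * ((k:ℝ)+1) + (N:ℝ) * c := by
    have hcast : (S N : ℝ) ≤ ∑ a ∈ Finset.Icc 2 (Nat.sqrt N), (Pn (N / a^2) : ℝ) := by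
      rw [← Nat.cast_sum]
      exact_mod_cast S_le_sum N
    have hterm : ∀ a ∈ Finset.Icc 2 (Nat.sqrt N),
        (Pn (N / a^2) : ℝ) ≤ ((k:ℝ)+1) + ((N:ℝ) * c) * (1/(a:ℝ)^2) := by
      intro a ha
      simp only [Finset.mem_Icc] at ha
      have ha0 : (0:ℝ) < (a:ℝ) := by exact_mod_cast (by omega : 0 < a)
      have hPn : (Pn (N/a^2) : ℝ) ≤ ((k:ℝ)+1) + (PC (N/a^2) k : ℝ) := by
        have := Pn_le (N/a^2) k
        push_cast
        exact_mod_cast this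
      have hPC : (PC (N/a^2) k : ℝ) ≤ ((N:ℝ)/(a:ℝ)^2) * c := by
        have h := PC_le_real (N/a^2) k hk1
        have hdiv : ((N/a^2 : ℕ) : ℝ) ≤ (N:ℝ)/((a:ℝ)^2) := by
          have := Nat.cast_div_le (m := N) (n := a^2) (α := ℝ)
          push_cast at this ⊢
          exact this
        push_cast at h
        rw [hc, ← mul_div_assoc, le_div_iff₀ hlogk_pos]
        calc (PC (N/a^2) k : ℝ) * Real.log ((k:ℝ)+1)
            ≤ ((N/a^2 : ℕ) : ℝ) * Real.log 4 := h
          _ ≤ (N:ℝ)/(a:ℝ)^2 * Real.log 4 :=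
              mul_le_mul_of_nonneg_right hdiv hlog4_nonneg
      have : ((N:ℝ)/(a:ℝ)^2) * c = ((N:ℝ) * c) * (1/(a:ℝ)^2) := by ring
      linarith [hPn, hPC]
    calc (S N : ℝ) ≤ ∑ a ∈ Finset.Icc 2 (Nat.sqrt N), (((k:ℝ)+1) + ((N:ℝ) * c) * (1/(a:ℝ)^2)) :=
          hcast.trans (Finset.sum_le_sum hterm)
      _ = (Finset.Icc 2 (Nat.sqrt N)).card * ((k:ℝ)+1)
            + ((N:ℝ) * c) * ∑ a ∈ Finset.Icc 2 (Nat.sqrt N), (1/(a:ℝ)^2) := by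
          rw [Finset.sum_add_distrib, Finset.sum_const, ← Finset.mul_sum]
          push_cast; ring
      _ ≤ (Nat.sqrt N : ℝ) * ((k:ℝ)+1) + (N:ℝ) * c := by
          have hcard : ((Finset.Icc 2 (Nat.sqrt N)).card : ℝ) ≤ (Nat.sqrt N : ℝ) := by
            rw [Nat.card_Icc]
            exact_mod_cast (by omega : Nat.sqrt N + 1 - 2 ≤ Nat.sqrt N)
          have hsum := sum_inv_sq (Nat.sqrt N)
          have hk0 : (0:ℝ) ≤ (k:ℝ)+1 := by positivity
          have hNc : (0:ℝ) ≤ (N:ℝ) * c := by positivity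
          nlinarith [Finset.sum_nonneg (fun a _ => by positivity :
            ∀ a ∈ Finset.Icc 2 (Nat.sqrt N), (0:ℝ) ≤ 1/(a:ℝ)^2)]
  -- step 2 : multiply by log N
  set s := Real.sqrt N with hs
  have hs_sq : s^2 = N := Real.sq_sqrt (le_of_lt hNpos)
  have hs_pos : 0 < s := Real.sqrt_pos.mpr hNpos
  have hss := Real.sqrt_nonneg s
  have hss_sq : (Real.sqrt s)^2 = s := Real.sq_sqrt hs_pos.le
  have hsqnat : (Nat.sqrt N : ℝ) ≤ s := Real.nat_sqrt_le_real_sqrt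
  have hknat : (k:ℝ) ≤ Real.sqrt s := by
    calc (k:ℝ) ≤ Real.sqrt (Nat.sqrt N) := Real.nat_sqrt_le_real_sqrt
      _ ≤ Real.sqrt s := Real.sqrt_le_sqrt hsqnat
  have hk2R : (2:ℝ) ≤ (k:ℝ) := by exact_mod_cast hk2
  have hss1 : 1 ≤ Real.sqrt s := le_trans (by linarith) hknat
  have hlogs : Real.log N ≤ 4 * Real.sqrt s := by
    have h1 : Real.log N = 4 * Real.log (Real.sqrt s) := by
      rw [Real.log_sqrt hs_pos.le, hs, Real.log_sqrt hNpos.le]; ring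
    have h2 : Real.log (Real.sqrt s) ≤ Real.sqrt s - 1 :=
      Real.log_le_sub_one_of_pos (by positivity)
    linarith
  have hterm1 : (Nat.sqrt N : ℝ) * ((k:ℝ)+1) * Real.log N ≤ 8 * N := by
    have hk1' : (k:ℝ)+1 ≤ 2 * Real.sqrt s := by linarith
    have l1 : (0:ℝ) ≤ (Nat.sqrt N : ℝ) := by positivity
    have l2 : (0:ℝ) ≤ (k:ℝ)+1 := by positivity
    have A : (Nat.sqrt N : ℝ) * ((k:ℝ)+1) ≤ s * (2*Real.sqrt s) :=
      mul_le_mul hsqnat hk1' l2 hs_pos.le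
    have B : (Nat.sqrt N : ℝ) * ((k:ℝ)+1) * Real.log N ≤ (s * (2*Real.sqrt s)) * (4*Real.sqrt s) :=
      mul_le_mul A hlogs hlogN_pos.le (by positivity)
    calc (Nat.sqrt N : ℝ) * ((k:ℝ)+1) * Real.log N ≤ s * (2*Real.sqrt s) * (4*Real.sqrt s) := B
      _ = 8 * (s * (Real.sqrt s)^2) := by ring
      _ = 8 * N := by rw [hss_sq, ← hs_sq]; ring
  have hterm2 : (N:ℝ) * c * Real.log N ≤ 12 * N := by
    have hc4 : c * Real.log N ≤ 4 * Real.log 4 := by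
      rw [hc, div_mul_eq_mul_div, div_le_iff₀ hlogk_pos]
      nlinarith
    have hlog4 : Real.log 4 ≤ 3 := by
      have := Real.log_le_sub_one_of_pos (by norm_num : (0:ℝ) < 4)
      linarith
    nlinarith
  have hmul := mul_le_mul_of_nonneg_right h1 hlogN_pos.le
  have hring : ((Nat.sqrt N : ℝ) * ((k:ℝ)+1) + (N:ℝ) * c) * Real.log N
      = (Nat.sqrt N : ℝ) * ((k:ℝ)+1) * Real.log N + (N:ℝ) * c * Real.log N := by ring
  rw [hring] at hmul
  linarith [hmul, hterm1, hterm2]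

open scoped Classical in
lemma SPFarey_le (x : ℝ) : SPFarey x ≤ S ⌊x⌋₊ ^ 2 := by
  have hsub : ((Finset.range (⌊x⌋₊ + 1) ×ˢ Finset.range (⌊x⌋₊ + 1)).filter
      (fun st => IsSP st.1 ∧ IsSP st.2 ∧ st.1 < st.2 ∧ Nat.gcd st.1 st.2 = 1)) ⊆
      ((Finset.range (⌊x⌋₊ + 1)).filter IsSP) ×ˢ ((Finset.range (⌊x⌋₊ + 1)).filter IsSP) := by
    intro st hst
    simp only [Finset.mem_filter, Finset.mem_product] at hst ⊢
    exact ⟨⟨hst.1.1, hst.2.1⟩, hst.1.2, hst.2.2.1⟩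
  calc SPFarey x ≤ _ := Finset.card_le_card hsub
    _ = S ⌊x⌋₊ ^ 2 := by rw [Finset.card_product]; rw [sq]; rfl

/-- `SPFarey(x) = O(x² / (log x)²)`. -/
theorem SPFarey_bigO :
    ∃ C : ℝ, 0 < C ∧ ∃ X : ℝ, ∀ x : ℝ, X ≤ x →
      (SPFarey x : ℝ) ≤ C * x ^ 2 / (Real.log x) ^ 2 := by
  refine ⟨1600, by norm_num, 16, fun x hx => ?_⟩
  have hx0 : (0:ℝ) < x := by linarith
  set N := ⌊x⌋₊ with hNdef
  have hN16 : 16 ≤ N := Nat.le_floor (by exact_mod_cast hx)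
  have hNx : (N:ℝ) ≤ x := Nat.floor_le hx0.le
  have hNpos : (0:ℝ) < N := by
    have : (16:ℝ) ≤ N := by exact_mod_cast hN16
    linarith
  have hlogx_pos : 0 < Real.log x := Real.log_pos (by linarith)
  -- sqrt x ≤ N
  have hsx : Real.sqrt x ≤ (N:ℝ) := by
    have h1 : x - 1 < (N:ℝ) := Nat.sub_one_lt_floor x
    have hs := Real.sq_sqrt hx0.le
    have hsn := Real.sqrt_nonneg x
    have h4 : (4:ℝ) ≤ Real.sqrt x := by nlinarith
    nlinarith
  have hlogN : Real.log x / 2 ≤ Real.log N := by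
    calc Real.log x / 2 = Real.log (Real.sqrt x) := (Real.log_sqrt hx0.le).symm
      _ ≤ Real.log N := Real.log_le_log (Real.sqrt_pos.mpr hx0) hsx
  have hlogN_pos : 0 < Real.log N := by linarith
  -- S N ≤ 40 x / log x
  have hS : (S N : ℝ) ≤ 40 * x / Real.log x := by
    rw [le_div_iff₀ hlogx_pos]
    have hb := S_bound N hN16
    have h2 : (S N : ℝ) * Real.log x ≤ (S N : ℝ) * (2 * Real.log N) := by
      apply mul_le_mul_of_nonneg_left (by linarith) (by positivity)
    calc (S N : ℝ) * Real.log x ≤ (S N : ℝ) * (2 * Real.log N) := h2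
      _ = 2 * ((S N : ℝ) * Real.log N) := by ring
      _ ≤ 2 * (20 * N) := by linarith
      _ ≤ 40 * x := by linarith
  have hfin : (SPFarey x : ℝ) ≤ ((S N : ℝ))^2 := by
    have := SPFarey_le x
    exact_mod_cast (by exact_mod_cast this : (SPFarey x : ℝ) ≤ ((S N ^ 2 : ℕ) : ℝ))
  calc (SPFarey x : ℝ) ≤ ((S N : ℝ))^2 := hfin
    _ ≤ (40 * x / Real.log x)^2 := by
        apply pow_le_pow_left₀ (by positivity) hS
    _ = 1600 * x^2 / (Real.log x)^2 := by
        rw [div_pow]; ring_nf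
end

section
/- The SP harmonic series diverges: the partial sums of the reciprocals of the SP numbers, taken in increasing order, tend to infinity. Equivalently, the sum of 1/s over all SP numbers s is not finite. -/
open Filter

open scoped Classical in
/-- The SP harmonic series diverges: the partial sums of the reciprocals of the
SP numbers tend to infinity; equivalently the family `1/s` over SP numbers `s`
is not summable. -/
theorem SP_harmonic_diverges :
    Tendsto (fun N : ℕ => ∑ s ∈ (Finset.range (N + 1)).filter IsSP, (1 : ℝ) / s)
      atTop atTop ∧
    ¬ Summable (fun s : {n : ℕ // IsSP n} => (1 : ℝ) / (s : ℕ)) := by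
  have hns : ¬ Summable (fun s : {n : ℕ // IsSP n} => (1 : ℝ) / (s : ℕ)) := by
    intro h
    apply Nat.Primes.not_summable_one_div
    set g : Nat.Primes → {n : ℕ // IsSP n} :=
      fun p => ⟨(p : ℕ) * 2 ^ 2, ⟨p, 2, p.2, le_refl 2, rfl⟩⟩ with hg
    have inj : Function.Injective g := by
      intro p q hpq
      simp only [hg, Subtype.mk.injEq] at hpq
      exact Subtype.ext (by have := congrArg Subtype.val hpq; simp only [hg] at this; omega)
    have h2 := (h.comp_injective inj).mul_left 4
    have heq : (fun p : Nat.Primes => 4 * ((fun s : {n : ℕ // IsSP n} => (1 : ℝ) / (s : ℕ)) ∘ g) p)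
        = fun p : Nat.Primes => 1 / (p : ℝ) := by
      funext p
      have hp : (0:ℝ) < ((p : ℕ) : ℝ) := by exact_mod_cast p.2.pos
      simp only [Function.comp, hg]
      push_cast
      field_simp
    rwa [heq] at h2
  have hind : ¬ Summable (Set.indicator {n : ℕ | IsSP n} fun n => (1:ℝ)/n) := by
    rw [← summable_subtype_iff_indicator]
    exact hns
  have hnonneg : ∀ n, 0 ≤ (Set.indicator {n : ℕ | IsSP n} fun n => (1:ℝ)/n) n := by
    intro n
    apply Set.indicator_nonneg
    intro m _
    positivity
  have htend : Tendsto (fun n => ∑ i ∈ Finset.range n,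
      (Set.indicator {n : ℕ | IsSP n} fun n => (1:ℝ)/n) i) atTop atTop := by
    by_contra hc
    exact hind ((summable_iff_not_tendsto_nat_atTop_of_nonneg hnonneg).mpr hc)
  constructor
  · have := htend.comp (tendsto_add_atTop_nat 1)
    refine this.congr (fun N => ?_)
    simp only [Function.comp]
    rw [Finset.sum_filter]
    refine Finset.sum_congr rfl (fun n _ => ?_)
    by_cases hn : IsSP n
    · simp [Set.indicator, hn]
    · simp [Set.indicator, hn]
  · exact hns
end

section
/- Define SPHarmonic(k) as the sum of 1/s over all SP numbers s ≤ k. Then SPHarmonic(k) = O(log log k); that is, there exist a constant C > 0 and a threshold K such that for all k ≥ K, SPHarmonic(k) ≤ C·log(log k). -/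
open scoped Classical in
/-- `SPHarmonic k` is the sum of `1/s` over all SP numbers `s ≤ k`. -/
noncomputable def SPHarmonic (k : ℝ) : ℝ :=
  ∑ s ∈ (Finset.range (⌊k⌋₊ + 1)).filter IsSP, (1 : ℝ) / s

open Finset

/-- Sum of reciprocals of primes up to `n`. -/
noncomputable def Pr (n : ℕ) : ℝ := ∑ p ∈ (range (n+1)).filter Nat.Prime, (1 : ℝ) / p

lemma Pr_nonneg (n : ℕ) : 0 ≤ Pr n := by
  apply Finset.sum_nonneg
  intro p _
  positivity

lemma Pr_mono {a b : ℕ} (h : a ≤ b) : Pr a ≤ Pr b := by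
  apply Finset.sum_le_sum_of_subset_of_nonneg
  · exact Finset.filter_subset_filter _ (Finset.range_subset_range.2 (by omega))
  · intro p _ _; positivity

lemma block_card (m : ℕ) :
    m * ((Ico (2^m+1) (2^(m+1)+1)).filter Nat.Prime).card ≤ 2^(m+2) := by
  set S := (Ico (2^m+1) (2^(m+1)+1)).filter Nat.Prime with hS
  have hsub : S ⊆ (range (2^(m+1)+1)).filter Nat.Prime := by
    intro p hp
    rw [hS, mem_filter, mem_Ico] at hp
    rw [mem_filter, mem_range]
    exact ⟨by omega, hp.2⟩
  have hdvd : (∏ p ∈ S, p) ∣ primorial (2^(m+1)) :=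
    Finset.prod_dvd_prod_of_subset _ _ _ hsub
  have hle : (∏ p ∈ S, p) ≤ 4 ^ (2^(m+1)) :=
    le_trans (Nat.le_of_dvd (primorial_pos _) hdvd) (primorial_le_4_pow _)
  have hlow : (2^m) ^ S.card ≤ ∏ p ∈ S, p := by
    apply Finset.pow_card_le_prod
    intro p hp
    rw [hS, mem_filter, mem_Ico] at hp
    omega
  have : 2 ^ (m * S.card) ≤ 2 ^ (2^(m+2)) := by
    calc 2 ^ (m * S.card) = (2^m) ^ S.card := by rw [pow_mul]
      _ ≤ 4 ^ (2^(m+1)) := le_trans hlow hle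
      _ = 2 ^ (2^(m+2)) := by
          rw [show (4:ℕ) = 2^2 by norm_num, ← pow_mul, pow_succ]
          ring_nf
  exact (Nat.pow_le_pow_iff_right (by norm_num)).1 this

lemma block_sum (m : ℕ) (hm : 1 ≤ m) :
    ∑ p ∈ (Ico (2^m+1) (2^(m+1)+1)).filter Nat.Prime, (1 : ℝ) / p ≤ 4 / m := by
  set S := (Ico (2^m+1) (2^(m+1)+1)).filter Nat.Prime with hS
  have hcard : (m : ℝ) * S.card ≤ 2^(m+2) := by
    have := block_card m
    calc (m : ℝ) * S.card = ((m * S.card : ℕ) : ℝ) := by push_cast; ring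
      _ ≤ ((2^(m+2) : ℕ) : ℝ) := by exact_mod_cast this
      _ = 2^(m+2) := by push_cast; ring
  have h1 : ∑ p ∈ S, (1 : ℝ) / p ≤ S.card * (1 / 2^m) := by
    rw [← nsmul_eq_mul]
    apply Finset.sum_le_card_nsmul
    intro p hp
    rw [hS, mem_filter, mem_Ico] at hp
    have hp' : (2:ℝ)^m ≤ p := by
      have : (2:ℕ)^m ≤ p := by omega
      exact_mod_cast this
    apply div_le_div_of_nonneg_left (by norm_num) (by positivity) hp'
  refine h1.trans ?_
  have hm' : (0:ℝ) < m := by exact_mod_cast hm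
  rw [mul_one_div, div_le_div_iff₀ (by positivity) hm']
  have h2 : (2:ℝ)^(m+2) = 4 * 2^m := by ring
  nlinarith [pow_pos (show (0:ℝ) < 2 by norm_num) m]

lemma Pr_two_pow (m : ℕ) :
    Pr (2^(m+1)) ≤ 1/2 + 4 * ∑ j ∈ range m, (1 : ℝ) / (j+1) := by
  induction m with
  | zero =>
      have : (range (2^1+1)).filter Nat.Prime = {2} := by decide
      rw [Pr, this]
      norm_num
  | succ m ih =>
      have hsplit :
          Pr (2^(m+2)) = Pr (2^(m+1)) +
            ∑ p ∈ (Ico (2^(m+1)+1) (2^(m+2)+1)).filter Nat.Prime, (1 : ℝ) / p := by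
        simp only [Pr, sum_filter, range_eq_Ico]
        rw [← Finset.sum_Ico_consecutive _ (Nat.zero_le (2^(m+1)+1))
          (by have := Nat.pow_le_pow_right (show 1 ≤ 2 by norm_num) (show m+1 ≤ m+2 by omega); omega)]
      rw [hsplit]
      have hb := block_sum (m+1) (by omega)
      simp only [show m+1+1 = m+2 by omega] at hb
      have hsum : ∑ j ∈ range (m+1), (1:ℝ)/(j+1)
          = (∑ j ∈ range m, (1:ℝ)/(j+1)) + 1/(m+1) := by
        rw [Finset.sum_range_succ]
      rw [hsum]
      push_cast at hb ⊢
      have h4 : (4:ℝ)/((m:ℝ)+1) = 4 * (1/((m:ℝ)+1)) := by ring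
      rw [h4] at hb
      linarith

lemma sum_inv_le_log (m : ℕ) :
    ∑ j ∈ range m, (1 : ℝ) / (j+1) ≤ 1 + Real.log m := by
  have h := harmonic_le_one_add_log m
  have heq : ((harmonic m : ℚ) : ℝ) = ∑ j ∈ range m, (1 : ℝ) / (j+1) := by
    rw [harmonic]
    push_cast
    simp [one_div]
  linarith [heq ▸ h]

lemma Pr_le (n : ℕ) (hn : 2 ≤ n) :
    Pr n ≤ 8.5 + 4 * Real.log (Real.log n) := by
  set m := Nat.log 2 n with hm
  have hm1 : 1 ≤ m := by
    rw [hm]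
    exact (Nat.le_log_iff_pow_le (by norm_num) (by omega)).2 (by simpa using hn)
  have hup : n < 2^(m+1) := Nat.lt_pow_succ_log_self (by norm_num) n
  have hlow : 2^m ≤ n := Nat.pow_log_le_self 2 (by omega)
  have h1 : Pr n ≤ 1/2 + 4 * (1 + Real.log m) :=
    le_trans (Pr_mono (by omega)) (le_trans (Pr_two_pow m)
      (by linarith [sum_inv_le_log m]))
  -- bound log m
  have hlogn : Real.log 2 ≤ Real.log n := by
    apply Real.log_le_log (by norm_num)
    exact_mod_cast hn
  have hlog2 : (0.6931471803 : ℝ) < Real.log 2 := Real.log_two_gt_d9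
  have hmlog : (m : ℝ) ≤ 2 * Real.log n := by
    have h2m : (2:ℝ)^m ≤ n := by exact_mod_cast hlow
    have := Real.log_le_log (by positivity) h2m
    rw [Real.log_pow] at this
    nlinarith
  have hlogm : Real.log m ≤ 1 + Real.log (Real.log n) := by
    have hmpos : (0:ℝ) < m := by exact_mod_cast hm1
    have h2 : Real.log m ≤ Real.log (2 * Real.log n) := Real.log_le_log hmpos hmlog
    have hlognpos : (0:ℝ) < Real.log n := by linarith
    rw [Real.log_mul (by norm_num) (ne_of_gt hlognpos)] at h2
    have : Real.log 2 ≤ 1 := by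
      have := Real.log_two_lt_d9
      linarith
    linarith
  linarith

open scoped Classical in
noncomputable def rep (s : ℕ) : ℕ × ℕ :=
  if h : IsSP s then (h.choose, h.choose_spec.choose) else (0, 0)

open scoped Classical in
lemma rep_spec {s : ℕ} (h : IsSP s) :
    (rep s).1.Prime ∧ 2 ≤ (rep s).2 ∧ s = (rep s).1 * (rep s).2 ^ 2 := by
  rw [rep, dif_pos h]
  exact ⟨h.choose_spec.choose_spec.1, h.choose_spec.choose_spec.2.1,
    h.choose_spec.choose_spec.2.2⟩

open scoped Classical in
lemma SPH_le (k : ℝ) : SPHarmonic k ≤ Pr ⌊k⌋₊ := by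
  set n := ⌊k⌋₊ with hn
  rw [SPHarmonic]
  set S := (range (n + 1)).filter IsSP with hS
  have hmem : ∀ s ∈ S, IsSP s ∧ s ≤ n := by
    intro s hs
    rw [hS, mem_filter, mem_range] at hs
    exact ⟨hs.2, by omega⟩
  have hinj : ∀ s₁ ∈ S, ∀ s₂ ∈ S, rep s₁ = rep s₂ → s₁ = s₂ := by
    intro s₁ h₁ s₂ h₂ he
    have r₁ := rep_spec (hmem s₁ h₁).1
    have r₂ := rep_spec (hmem s₂ h₂).1
    rw [r₁.2.2, r₂.2.2, he]
  have key : ∑ s ∈ S, (1 : ℝ) / s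
      = ∑ x ∈ S.image rep, (1 : ℝ) / x.1 * (1 / (x.2 : ℝ) ^ 2) := by
    rw [Finset.sum_image hinj]
    apply Finset.sum_congr rfl
    intro s hs
    have r := rep_spec (hmem s hs).1
    have hcast : (s : ℝ) = ((rep s).1 : ℝ) * ((rep s).2 : ℝ) ^ 2 := by
      exact_mod_cast congrArg (Nat.cast (R := ℝ)) r.2.2
    rw [hcast]
    ring
  rw [key]
  have hsub : S.image rep ⊆ ((range (n+1)).filter Nat.Prime) ×ˢ (Ioc 1 n) := by
    intro x hx
    rw [Finset.mem_image] at hx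
    obtain ⟨s, hs, rfl⟩ := hx
    obtain ⟨hsp, hsn⟩ := hmem s hs
    have r := rep_spec hsp
    obtain ⟨hp, ha, hse⟩ := r
    rw [Finset.mem_product, mem_filter, mem_range, Finset.mem_Ioc]
    have hple : (rep s).1 ≤ s := by
      calc (rep s).1 = (rep s).1 * 1 := (mul_one _).symm
        _ ≤ (rep s).1 * (rep s).2 ^ 2 := Nat.mul_le_mul_left _ (by nlinarith)
        _ = s := hse.symm
    have hale : (rep s).2 ≤ s := by
      calc (rep s).2 ≤ (rep s).2 ^ 2 := by nlinarith
        _ ≤ (rep s).1 * (rep s).2 ^ 2 := Nat.le_mul_of_pos_left _ hp.pos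
        _ = s := hse.symm
    exact ⟨⟨by omega, hp⟩, by omega, by omega⟩
  have hstep : ∑ x ∈ S.image rep, (1 : ℝ) / x.1 * (1 / (x.2 : ℝ) ^ 2)
      ≤ ∑ x ∈ ((range (n+1)).filter Nat.Prime) ×ˢ (Ioc 1 n),
          (1 : ℝ) / x.1 * (1 / (x.2 : ℝ) ^ 2) := by
    apply Finset.sum_le_sum_of_subset_of_nonneg hsub
    intro x _ _
    positivity
  refine hstep.trans ?_
  rw [Finset.sum_product]
  have hprod : ∑ p ∈ (range (n+1)).filter Nat.Prime, ∑ a ∈ Ioc 1 n,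
      (1 : ℝ) / p * (1 / (a : ℝ) ^ 2)
      = Pr n * ∑ a ∈ Ioc 1 n, (1 / (a : ℝ) ^ 2) := by
    rw [Pr, Finset.sum_mul]
    apply Finset.sum_congr rfl
    intro p _
    rw [Finset.mul_sum]
  rw [hprod]
  have hsq : ∑ a ∈ Ioc 1 n, (1 / (a : ℝ) ^ 2) ≤ 1 := by
    rcases Nat.lt_or_ge n 1 with h | h
    · interval_cases n
      simp
    · have := sum_Ioc_inv_sq_le_sub (α := ℝ) (k := 1) (n := n) (by norm_num) h
      simp only [one_div]
      have hn0 : (0:ℝ) ≤ (n:ℝ)⁻¹ := by positivity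
      calc ∑ a ∈ Ioc 1 n, ((a:ℝ)^2)⁻¹ ≤ (1:ℝ)⁻¹ - (n:ℝ)⁻¹ := by simpa using this
        _ ≤ 1 := by simp
  calc Pr n * ∑ a ∈ Ioc 1 n, (1 / (a : ℝ) ^ 2) ≤ Pr n * 1 :=
        mul_le_mul_of_nonneg_left hsq (Pr_nonneg n)
    _ = Pr n := mul_one _

/-- `SPHarmonic(k) = O(log log k)`. -/
theorem SPHarmonic_bigO_loglog :
    ∃ C : ℝ, 0 < C ∧ ∃ K : ℝ, ∀ k : ℝ, K ≤ k →
      SPHarmonic k ≤ C * Real.log (Real.log k) := by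
  refine ⟨13, by norm_num, Real.exp (Real.exp 1), ?_⟩
  intro k hk
  have he1 : (2:ℝ) ≤ Real.exp 1 := by
    have := Real.add_one_le_exp (1:ℝ)
    linarith
  have hk3 : (3:ℝ) ≤ k := by
    have h2 : Real.exp 2 ≤ Real.exp (Real.exp 1) := Real.exp_le_exp.2 he1
    have h3 : (3:ℝ) ≤ Real.exp 2 := by
      have := Real.add_one_le_exp (2:ℝ)
      linarith
    linarith
  have hkpos : (0:ℝ) < k := by linarith
  have hfl : (3:ℕ) ≤ ⌊k⌋₊ := Nat.le_floor (by exact_mod_cast hk3)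
  have hflle : (⌊k⌋₊ : ℝ) ≤ k := Nat.floor_le (le_of_lt hkpos)
  have hfl2 : (2:ℝ) ≤ (⌊k⌋₊ : ℝ) := by exact_mod_cast (by omega : 2 ≤ ⌊k⌋₊)
  -- log log k ≥ 1
  have hlogk : Real.exp 1 ≤ Real.log k := by
    have := Real.log_le_log (Real.exp_pos _) hk
    rwa [Real.log_exp] at this
  have hloglogk : (1:ℝ) ≤ Real.log (Real.log k) := by
    have := Real.log_le_log (Real.exp_pos 1) hlogk
    rwa [Real.log_exp] at this
  -- monotonicity chain
  have hlogfl : Real.log (⌊k⌋₊ : ℝ) ≤ Real.log k :=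
    Real.log_le_log (by linarith) hflle
  have hlogflpos : (0:ℝ) < Real.log (⌊k⌋₊ : ℝ) := by
    have := Real.log_le_log (by norm_num : (0:ℝ) < 2) hfl2
    have h2 : (0:ℝ) < Real.log 2 := Real.log_pos (by norm_num)
    linarith
  have hll : Real.log (Real.log (⌊k⌋₊ : ℝ)) ≤ Real.log (Real.log k) :=
    Real.log_le_log hlogflpos hlogfl
  have h1 := SPH_le k
  have h2 := Pr_le ⌊k⌋₊ (by omega)
  calc SPHarmonic k ≤ Pr ⌊k⌋₊ := h1
    _ ≤ 8.5 + 4 * Real.log (Real.log (⌊k⌋₊ : ℝ)) := h2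
    _ ≤ 8.5 + 4 * Real.log (Real.log k) := by linarith
    _ ≤ 13 * Real.log (Real.log k) := by nlinarith
end

section
/- Define SPHarmonic(k) as the sum of 1/s over all SP numbers s ≤ k. Then SPHarmonic(k) − (ζ(2) − 1)·(log log k + M) tends to 0 as k tends to infinity, where M is the Meissel–Mertens constant; equivalently, SPHarmonic(k) = (π²/6 − 1)·(log log k + M) + o(1). -/
open Filter

open scoped Classical in
/-- A real number `M` is the Meissel–Mertens constant if
`M = lim_{x → ∞} (∑_{p prime, p ≤ x} 1/p - log log x)`. -/
def IsMeisselMertens (M : ℝ) : Prop :=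
  Tendsto (fun x : ℝ =>
      (∑ p ∈ (Finset.range (⌊x⌋₊ + 1)).filter Nat.Prime, (1 : ℝ) / p) -
        Real.log (Real.log x))
    atTop (nhds M)



noncomputable def Psum (x : ℝ) : ℝ :=
  ∑ p ∈ (Finset.range (⌊x⌋₊ + 1)).filter Nat.Prime, (1 : ℝ) / p

lemma Psum_nonneg (x : ℝ) : 0 ≤ Psum x :=
  Finset.sum_nonneg fun p _ => by positivity

lemma Psum_eq_zero {x : ℝ} (hx : x < 2) : Psum x = 0 := by
  have h1 : ⌊x⌋₊ < 2 := by
    rcases le_or_gt 0 x with h | h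
    · exact (Nat.floor_lt h).2 (by norm_num [hx])
    · simp [Nat.floor_eq_zero.2 (by linarith : x < 1)]
  unfold Psum
  rw [Finset.sum_eq_zero]
  intro p hp
  simp only [Finset.mem_filter, Finset.mem_range] at hp
  exact absurd hp.2.two_le (by omega)

lemma Psum_mono : Monotone Psum := by
  intro x y hxy
  apply Finset.sum_le_sum_of_subset_of_nonneg
  · exact Finset.filter_subset_filter _
      (Finset.range_subset_range.2 (by have := Nat.floor_le_floor hxy; omega))
  · intro p _ _; positivity

lemma sp_unique {p q a b : ℕ} (hp : p.Prime) (hq : q.Prime) (ha : a ≠ 0) (hb : b ≠ 0)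
    (h : p * a ^ 2 = q * b ^ 2) : p = q ∧ a = b := by
  have hpq : p = q := by
    by_contra hne
    have h1 : (p * a ^ 2).factorization p = 1 + 2 * a.factorization p := by
      rw [Nat.factorization_mul hp.ne_zero (pow_ne_zero _ ha), Nat.factorization_pow]
      simp [hp.factorization]
    have h2 : (q * b ^ 2).factorization p = 2 * b.factorization p := by
      rw [Nat.factorization_mul hq.ne_zero (pow_ne_zero _ hb), Nat.factorization_pow]
      simp [hq.factorization, Finsupp.single_apply, (Ne.symm hne)]
    rw [h, h2] at h1
    omega
  subst hpq
  have : a ^ 2 = b ^ 2 := by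
    exact Nat.eq_of_mul_eq_mul_left hp.pos h
  exact ⟨rfl, Nat.pow_left_injective (by norm_num) this⟩

noncomputable def cfun (a : ℕ) : ℝ := if 2 ≤ a then 1 / (a : ℝ) ^ 2 else 0

lemma cfun_nonneg (a : ℕ) : 0 ≤ cfun a := by
  unfold cfun; split <;> positivity

lemma hasSum_cfun : HasSum cfun (Real.pi ^ 2 / 6 - 1) := by
  have h1 : HasSum (fun n : ℕ => (1 : ℝ) / (n : ℝ) ^ 2) (Real.pi ^ 2 / 6) := hasSum_zeta_two
  have h2 : HasSum (fun n : ℕ => if n = 1 then (1 : ℝ) else 0) 1 := hasSum_ite_eq 1 1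
  have := h1.sub h2
  refine this.congr_fun fun n => ?_
  unfold cfun
  rcases n with _ | _ | n <;> simp <;> norm_num

lemma log_nat_le (a : ℕ) : Real.log a ≤ 2 * Real.sqrt a := by
  rcases Nat.eq_zero_or_pos a with h | h
  · simp [h]
  have h0 : (0 : ℝ) < a := by exact_mod_cast h
  have hs : (0 : ℝ) < Real.sqrt a := Real.sqrt_pos.2 h0
  have := Real.log_le_sub_one_of_pos hs
  have hl : Real.log (Real.sqrt a) = Real.log a / 2 := Real.log_sqrt h0.le
  linarith

lemma summable_cfun_log : Summable (fun a : ℕ => cfun a * Real.log a) := by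
  have hsum : Summable (fun a : ℕ => 2 * (1 / (a : ℝ) ^ (3/2 : ℝ))) :=
    (Real.summable_one_div_nat_rpow.2 (by norm_num)).mul_left 2
  refine Summable.of_nonneg_of_le (fun a => ?_) (fun a => ?_) hsum
  · have : (0:ℝ) ≤ Real.log a := by
      rcases Nat.eq_zero_or_pos a with h | h
      · simp [h]
      · exact Real.log_natCast_nonneg a
    exact mul_nonneg (cfun_nonneg a) this
  · unfold cfun
    split
    · rename_i h2
      have h0 : (0:ℝ) < a := by exact_mod_cast Nat.lt_of_lt_of_le (by norm_num) h2
      rw [div_mul_eq_mul_div, one_mul]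
      rw [div_le_iff₀ (by positivity)]
      have : Real.log a ≤ 2 * Real.sqrt a := log_nat_le a
      have hsqrt : Real.sqrt a = (a : ℝ) ^ (1/2 : ℝ) := Real.sqrt_eq_rpow a
      calc Real.log a ≤ 2 * (a : ℝ) ^ (1/2 : ℝ) := by rw [← hsqrt]; exact this
        _ = 2 * (1 / (a : ℝ) ^ (3/2 : ℝ)) * (a : ℝ) ^ 2 := by
            rw [show ((a:ℝ)^2 = (a:ℝ) ^ (2:ℝ)) from (Real.rpow_two _).symm ▸ by norm_num [Real.rpow_natCast]]
            rw [mul_assoc, div_mul_eq_mul_div, one_mul, ← Real.rpow_sub h0]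
            norm_num
    · rw [zero_mul]; positivity

open scoped Classical in
lemma SPHarmonic_eq (k : ℝ) :
    SPHarmonic k = ∑ a ∈ Finset.Icc 2 ⌊k⌋₊, (1 / (a : ℝ) ^ 2) * Psum (k / (a : ℝ) ^ 2) := by
  have hfl : ∀ a : ℕ, 2 ≤ a → ⌊k / (a : ℝ) ^ 2⌋₊ = ⌊k⌋₊ / a ^ 2 := by
    intro a _
    rw [show ((a : ℝ) ^ 2) = ((a ^ 2 : ℕ) : ℝ) by push_cast; ring, Nat.floor_div_natCast]
  have : ∀ a ∈ Finset.Icc 2 ⌊k⌋₊, (1 / (a : ℝ) ^ 2) * Psum (k / (a : ℝ) ^ 2)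
      = ∑ p ∈ (Finset.range (⌊k⌋₊ / a ^ 2 + 1)).filter Nat.Prime, (1 : ℝ) / (p * a ^ 2) := by
    intro a ha
    simp only [Finset.mem_Icc] at ha
    rw [Psum, hfl a ha.1, Finset.mul_sum]
    refine Finset.sum_congr rfl fun p hp => ?_
    have : (p : ℝ) ≠ 0 := by
      simp only [Finset.mem_filter] at hp
      exact_mod_cast hp.2.ne_zero
    field_simp
  have hsig := Finset.sum_sigma' (Finset.Icc 2 ⌊k⌋₊)
    (fun a => (Finset.range (⌊k⌋₊ / a ^ 2 + 1)).filter Nat.Prime)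
    (fun a p => (1 : ℝ) / (p * (a : ℝ) ^ 2))
  rw [Finset.sum_congr rfl this, hsig]
  unfold SPHarmonic
  refine (Finset.sum_bij (fun (x : Σ _ : ℕ, ℕ) _ => x.2 * x.1 ^ 2) ?_ ?_ ?_ ?_).symm
  · rintro ⟨a, p⟩ hx
    simp only [Finset.mem_sigma, Finset.mem_Icc, Finset.mem_filter, Finset.mem_range] at hx ⊢
    obtain ⟨⟨ha2, haN⟩, hpN, hp⟩ := hx
    have hpos : 0 < a ^ 2 := by positivity
    have : p * a ^ 2 ≤ ⌊k⌋₊ := (Nat.le_div_iff_mul_le hpos).1 (by omega)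
    exact ⟨by omega, ⟨p, a, hp, ha2, rfl⟩⟩
  · rintro ⟨a, p⟩ hx ⟨b, q⟩ hy hxy
    dsimp at hxy
    simp only [Finset.mem_sigma, Finset.mem_Icc, Finset.mem_filter, Finset.mem_range] at hx hy
    obtain ⟨hq, ha⟩ := sp_unique hx.2.2 hy.2.2 (by omega) (by omega) hxy
    simp [ha, hq]
  · intro s hs
    simp only [Finset.mem_filter, Finset.mem_range] at hs
    obtain ⟨hsN, p, a, hp, ha2, rfl⟩ := hs
    have hpos : 0 < a ^ 2 := by positivity
    have haa : a ≤ p * a ^ 2 := by nlinarith [hp.two_le]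
    refine ⟨⟨a, p⟩, ?_, rfl⟩
    simp only [Finset.mem_sigma, Finset.mem_Icc, Finset.mem_filter, Finset.mem_range]
    exact ⟨⟨ha2, by omega⟩, by
      have : p ≤ ⌊k⌋₊ / a ^ 2 := (Nat.le_div_iff_mul_le hpos).2 (by omega)
      omega, hp⟩
  · rintro ⟨a, p⟩ hx
    push_cast
    ring

lemma Fvanish (k : ℝ) : ∀ a ∉ Finset.Icc 2 ⌊k⌋₊, cfun a * Psum (k / (a : ℝ) ^ 2) = 0 := by
  intro a ha
  by_cases h2a : 2 ≤ a
  · have h : ⌊k⌋₊ < a := by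
      simp only [Finset.mem_Icc, not_and_or, not_le] at ha
      rcases ha with h | h
      · omega
      · exact h
    have hka : k < a := lt_of_lt_of_le (Nat.lt_floor_add_one k) (by exact_mod_cast h)
    have ha1 : (1:ℝ) ≤ (a:ℝ) := by exact_mod_cast Nat.one_le_of_lt h2a
    have : k / (a:ℝ) ^ 2 < 2 := by
      calc k / (a:ℝ) ^ 2 < (a:ℝ) / (a:ℝ) ^ 2 := by gcongr
        _ = 1 / (a:ℝ) := by rw [sq]; rw [div_mul_eq_div_div_swap, div_self (by linarith)]
        _ ≤ 1 := by rw [div_le_one (by linarith)]; linarith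
        _ < 2 := by norm_num
    rw [Psum_eq_zero this, mul_zero]
  · simp [cfun, h2a]

lemma summable_term (k : ℝ) : Summable (fun a : ℕ => cfun a * Psum (k / (a : ℝ) ^ 2)) :=
  summable_of_ne_finset_zero (s := Finset.Icc 2 ⌊k⌋₊) (Fvanish k)

lemma SPHarmonic_eq_tsum (k : ℝ) :
    SPHarmonic k = ∑' a : ℕ, cfun a * Psum (k / (a : ℝ) ^ 2) := by
  rw [SPHarmonic_eq, tsum_eq_sum (Fvanish k)]
  refine Finset.sum_congr rfl fun a ha => ?_
  simp only [Finset.mem_Icc] at ha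
  simp [cfun, ha.1]

lemma tendsto_pointwise (M : ℝ)
    (hE : Tendsto (fun x => Psum x - Real.log (Real.log x) - M) atTop (nhds 0)) (a : ℕ) :
    Tendsto (fun k : ℝ => cfun a * (Psum (k / (a : ℝ) ^ 2) - (Real.log (Real.log k) + M)))
      atTop (nhds 0) := by
  by_cases h2a : 2 ≤ a
  · have hpos : (0:ℝ) < (a:ℝ) ^ 2 := by
      have : (0:ℝ) < a := by exact_mod_cast Nat.lt_of_lt_of_le (by norm_num) h2a
      positivity
    set A := Real.log ((a:ℝ) ^ 2) with hA
    have hA0 : 0 ≤ A := Real.log_nonneg (by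
      have : (1:ℝ) ≤ (a:ℝ) := by exact_mod_cast Nat.one_le_of_lt h2a
      nlinarith)
    have h1 : Tendsto (fun k : ℝ => k / (a : ℝ) ^ 2) atTop atTop :=
      Tendsto.atTop_div_const hpos tendsto_id
    have h2 := hE.comp h1
    have hinv : Tendsto (fun k : ℝ => 1 - A / Real.log k) atTop (nhds 1) := by
      have h0 : Tendsto (fun k : ℝ => (Real.log k)⁻¹) atTop (nhds 0) :=
        Real.tendsto_log_atTop.inv_tendsto_atTop
      have h' : Tendsto (fun k : ℝ => A * (Real.log k)⁻¹) atTop (nhds 0) := by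
        simpa using h0.const_mul A
      have := tendsto_const_nhds (α := ℝ) (x := (1:ℝ)) (f := atTop) |>.sub h'
      simpa [div_eq_mul_inv] using this
    have hlog : Tendsto (fun k : ℝ => Real.log (1 - A / Real.log k)) atTop (nhds 0) := by
      have := (Real.continuousAt_log one_ne_zero).tendsto.comp hinv
      simpa [Function.comp_def] using this
    have h3 : Tendsto (fun k : ℝ =>
        Real.log (Real.log (k / (a : ℝ) ^ 2)) - Real.log (Real.log k)) atTop (nhds 0) := by
      refine hlog.congr' ?_
      filter_upwards [eventually_gt_atTop (Real.exp (A + 1))] with k hk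
      have hk0 : (0:ℝ) < k := lt_trans (Real.exp_pos _) hk
      have hlogk : A + 1 ≤ Real.log k := by
        rw [← Real.log_exp (A + 1)]
        exact Real.log_le_log (Real.exp_pos _) hk.le
      have hlk_pos : (0:ℝ) < Real.log k := by linarith
      have hsub_pos : (0:ℝ) < Real.log k - A := by linarith
      rw [Real.log_div (ne_of_gt hk0) (ne_of_gt hpos), ← hA,
        show (1 - A / Real.log k) = (Real.log k - A) / Real.log k by field_simp,
        Real.log_div (ne_of_gt hsub_pos) (ne_of_gt hlk_pos)]
    have h4 := (h2.add h3).const_mul (cfun a)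
    rw [add_zero, mul_zero] at h4
    refine h4.congr fun k => ?_
    simp only [Function.comp]
    ring
  · simp only [cfun, h2a, if_false, zero_mul]
    exact tendsto_const_nhds

lemma exists_bound (M : ℝ)
    (hE : Tendsto (fun x => Psum x - Real.log (Real.log x) - M) atTop (nhds 0)) :
    ∃ B : ℝ, 0 ≤ B ∧ ∀ x : ℝ, 2 ≤ x → |Psum x - Real.log (Real.log x) - M| ≤ B := by
  have h1 : ∀ᶠ x : ℝ in atTop, |Psum x - Real.log (Real.log x) - M| < 1 := by
    have := Metric.tendsto_nhds.mp hE 1 one_pos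
    simpa [Real.dist_eq] using this
  obtain ⟨x₀', hx₀'⟩ := eventually_atTop.1 h1
  set x₀ := max x₀' 3 with hx₀
  refine ⟨1 + Psum x₀ + |Real.log (Real.log 2)| + |Real.log (Real.log x₀)| + |M|, by have := Psum_nonneg x₀; positivity, ?_⟩
  intro x hx
  rcases le_or_gt x₀ x with h | h
  · have := hx₀' x (le_trans (le_max_left _ _) h)
    have h2 := Psum_nonneg x₀
    have h3 := abs_nonneg (Real.log (Real.log 2))
    have h4 := abs_nonneg (Real.log (Real.log x₀))
    have h5 := abs_nonneg M
    linarith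
  · have hx2 : (0:ℝ) < Real.log 2 := Real.log_pos (by norm_num)
    have hxx : (0:ℝ) < Real.log x := Real.log_pos (by linarith)
    have l1 : Real.log (Real.log 2) ≤ Real.log (Real.log x) :=
      Real.log_le_log hx2 (Real.log_le_log (by norm_num) hx)
    have l2 : Real.log (Real.log x) ≤ Real.log (Real.log x₀) :=
      Real.log_le_log hxx (Real.log_le_log (by linarith) h.le)
    have h3 : |Real.log (Real.log x)| ≤ |Real.log (Real.log 2)| + |Real.log (Real.log x₀)| := by
      rw [abs_le]
      constructor
      · have := neg_abs_le (Real.log (Real.log 2))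
        have := abs_nonneg (Real.log (Real.log x₀))
        linarith
      · have := le_abs_self (Real.log (Real.log x₀))
        have := abs_nonneg (Real.log (Real.log 2))
        linarith
    have h2 : Psum x ≤ Psum x₀ := Psum_mono h.le
    have h2' := Psum_nonneg x
    have habs : |Psum x - Real.log (Real.log x) - M| ≤
        |Psum x| + |Real.log (Real.log x)| + |M| := by
      calc |Psum x - Real.log (Real.log x) - M| ≤ |Psum x - Real.log (Real.log x)| + |M| :=
            abs_sub _ _
        _ ≤ |Psum x| + |Real.log (Real.log x)| + |M| := by
            have := abs_sub (Psum x) (Real.log (Real.log x))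
            linarith
    rw [abs_of_nonneg h2'] at habs
    linarith

/-- `SPHarmonic(k) = (π²/6 - 1)·(log log k + M) + o(1)`, where `M` is the
Meissel–Mertens constant: the difference tends to `0` as `k → ∞`. -/
theorem SPHarmonic_asymptotic :
    ∀ M : ℝ, IsMeisselMertens M →
      Tendsto (fun k : ℝ =>
          SPHarmonic k -
            (Real.pi ^ 2 / 6 - 1) * (Real.log (Real.log k) + M))
        atTop (nhds 0) := by

  intro M hM
  have hE : Tendsto (fun x => Psum x - Real.log (Real.log x) - M) atTop (nhds 0) := by
    have := hM.sub_const M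
    simp only [IsMeisselMertens, sub_self] at this ⊢
    refine this.congr fun x => ?_
    simp [Psum, Finset.filter_congr_decidable, sub_sub]
  obtain ⟨B, hB0, hB⟩ := exists_bound M hE
  set g : ℕ → ℝ := fun a => cfun a * (B + |M| + 3 * Real.log a) with hg_def
  have hg : Summable g := by
    have h1 : Summable (fun a : ℕ => cfun a * (B + |M|)) := hasSum_cfun.summable.mul_right _
    have h2 := summable_cfun_log.mul_left 3
    exact (h1.add h2).congr fun a => by simp [hg_def]; ring
  have key : ∀ k : ℝ, SPHarmonic k - (Real.pi ^ 2 / 6 - 1) * (Real.log (Real.log k) + M)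
      = ∑' a : ℕ, cfun a * (Psum (k / (a : ℝ) ^ 2) - (Real.log (Real.log k) + M)) := by
    intro k
    rw [SPHarmonic_eq_tsum k, ← hasSum_cfun.tsum_eq, ← tsum_mul_right,
      ← Summable.tsum_sub (summable_term k) (hasSum_cfun.summable.mul_right _)]
    exact tsum_congr fun a => by ring
  have hbound : ∀ᶠ k : ℝ in atTop, ∀ a : ℕ,
      ‖cfun a * (Psum (k / (a : ℝ) ^ 2) - (Real.log (Real.log k) + M))‖ ≤ g a := by
    filter_upwards [eventually_ge_atTop (3 : ℝ)] with k hk3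
    intro a
    by_cases h2a : 2 ≤ a
    · have ha1 : (2:ℝ) ≤ (a:ℝ) := by exact_mod_cast h2a
      have hpos : (0:ℝ) < (a:ℝ) ^ 2 := by positivity
      have hla : 0 ≤ Real.log a := Real.log_nonneg (by linarith)
      have hkpos : (0:ℝ) < k := by linarith
      have hlogk : 1 < Real.log k := by
        rw [← Real.log_exp 1]
        apply Real.log_lt_log (Real.exp_pos 1)
        calc Real.exp 1 < 2.7182818286 := Real.exp_one_lt_d9
          _ < 3 := by norm_num
          _ ≤ k := hk3
      have hloglogk : 0 < Real.log (Real.log k) := Real.log_pos hlogk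
      rw [norm_mul, Real.norm_eq_abs, Real.norm_eq_abs, abs_of_nonneg (cfun_nonneg a), hg_def]
      refine mul_le_mul_of_nonneg_left ?_ (cfun_nonneg a)
      have hMabs := abs_nonneg M
      rcases le_or_gt 2 (k / (a:ℝ)^2) with hc | hc
      · have hEb := abs_le.1 (hB _ hc)
        have hxk : k / (a:ℝ)^2 ≤ k := div_le_self hkpos.le (by nlinarith)
        have hl2pos : 0 < Real.log 2 := Real.log_pos (by norm_num)
        have hl2 : Real.log 2 ≤ Real.log (k/(a:ℝ)^2) := Real.log_le_log (by norm_num) hc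
        have hlq : Real.log (k/(a:ℝ)^2) ≤ Real.log k := Real.log_le_log (by linarith) hxk
        have hmono : Real.log (Real.log (k/(a:ℝ)^2)) ≤ Real.log (Real.log k) :=
          Real.log_le_log (by linarith) hlq
        set A := Real.log ((a:ℝ)^2) with hAdef
        have hA : A = 2 * Real.log a := by rw [hAdef, Real.log_pow]; push_cast; ring
        have hA0 : 0 ≤ A := by rw [hA]; linarith
        have hsplit : Real.log k = Real.log (k/(a:ℝ)^2) + A := by
          rw [hAdef, ← Real.log_mul (by positivity) (ne_of_gt hpos)]
          congr 1
          field_simp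
        have hdiff : Real.log (Real.log k) - Real.log (Real.log (k/(a:ℝ)^2))
            ≤ 3 * Real.log a := by
          rw [← Real.log_div (by linarith : Real.log k ≠ 0) (by linarith : Real.log (k/(a:ℝ)^2) ≠ 0)]
          have hratio : Real.log k / Real.log (k/(a:ℝ)^2) = 1 + A / Real.log (k/(a:ℝ)^2) := by
            rw [hsplit, add_div, div_self (by linarith : Real.log (k/(a:ℝ)^2) ≠ 0)]
          have hle : 1 + A / Real.log (k/(a:ℝ)^2) ≤ 1 + A / Real.log 2 := by gcongr
          have hposr : (0:ℝ) < 1 + A / Real.log 2 := by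
            have := div_nonneg hA0 hl2pos.le
            linarith
          calc Real.log (Real.log k / Real.log (k/(a:ℝ)^2))
              ≤ Real.log (1 + A / Real.log 2) := by
                rw [hratio]
                refine Real.log_le_log ?_ hle
                have : 0 ≤ A / Real.log (k/(a:ℝ)^2) := div_nonneg hA0 (by linarith)
                linarith
            _ ≤ A / Real.log 2 := by
                have := Real.log_le_sub_one_of_pos hposr
                linarith
            _ ≤ 3 * Real.log a := by
                have hlog2 : (0.6931471803:ℝ) < Real.log 2 := Real.log_two_gt_d9
                rw [hA, div_le_iff₀ hl2pos]
                nlinarith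
        rw [abs_le]
        constructor
        · nlinarith [hEb.1, hdiff]
        · nlinarith [hEb.2, hmono]
      · rw [Psum_eq_zero hc, zero_sub, abs_neg]
        have hk2a : k < 2*(a:ℝ)^2 := by
          rw [div_lt_iff₀ hpos] at hc
          linarith
        have h1 : Real.log k ≤ Real.log (2*(a:ℝ)^2) := Real.log_le_log hkpos hk2a.le
        have h2 : Real.log (2*(a:ℝ)^2) = Real.log 2 + 2*Real.log a := by
          rw [Real.log_mul two_ne_zero (ne_of_gt hpos), Real.log_pow]
          push_cast
          ring
        have h3 : Real.log (Real.log k) ≤ Real.log k - 1 :=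
          Real.log_le_sub_one_of_pos (by linarith)
        have hlog2le1 : Real.log 2 < 1 := by
          calc Real.log 2 < 0.6931471808 := Real.log_two_lt_d9
            _ < 1 := by norm_num
        have habs : |Real.log (Real.log k) + M| ≤ Real.log (Real.log k) + |M| := by
          calc |Real.log (Real.log k) + M| ≤ |Real.log (Real.log k)| + |M| := abs_add_le _ _
            _ = Real.log (Real.log k) + |M| := by rw [abs_of_pos hloglogk]
        nlinarith
    · simp [hg_def, cfun, h2a]
  have hptw : ∀ a : ℕ, Tendsto
      (fun k : ℝ => cfun a * (Psum (k / (a : ℝ) ^ 2) - (Real.log (Real.log k) + M)))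
      atTop (nhds 0) := tendsto_pointwise M hE
  have hmain := tendsto_tsum_of_dominated_convergence hg hptw hbound
  rw [tsum_zero] at hmain
  exact Tendsto.congr (fun k => (key k).symm) hmain
end
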